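/- arXiv:2305.18874 — 4 statements merged into one kernel-verified Lean document; each statement's English description precedes it below -/
import Mathlib

section
/- Let n ≥ 1, ω_0,...,ω_n > 0, and t ∈ (0,1). Then for every i with 1 ≤ i ≤ n, the quantity h^n_i(t) satisfies the recurrence h^n_i(t) = (ω_i · t · (n-i+1) · h^n_{i-1}(t)) / (ω_{i-1} · i · (1-t) + ω_i · t · (n-i+1) · h^n_{i-1}(t)), and the denominator ω_{i-1}·i·(1-t) + ω_i·t·(n-i+1)·h^n_{i-1}(t) is strictly positive. -/
open Finset

/-- The `k`-th Bernstein polynomial of degree `n`. -/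
noncomputable def bern (n k : ℕ) (t : ℝ) : ℝ :=
  (n.choose k : ℝ) * t ^ k * (1 - t) ^ (n - k)

/-- The quantity `h^n_i(t)`, with `h^n_0(t) := 1`. -/
noncomputable def hfun (n : ℕ) (ω : ℕ → ℝ) (i : ℕ) (t : ℝ) : ℝ :=
  if i = 0 then 1
  else ω i * bern n i t / ∑ k ∈ range (i + 1), ω k * bern n k t

lemma bern_pos {n k : ℕ} {t : ℝ} (hk : k ≤ n) (ht0 : 0 < t) (ht1 : t < 1) :
    0 < bern n k t := by
  unfold bern
  have h1 : 0 < (n.choose k : ℝ) := by exact_mod_cast Nat.choose_pos hk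
  have h2 : 0 < 1 - t := by linarith
  positivity

lemma sum_pos' (n : ℕ) (ω : ℕ → ℝ) (hω : ∀ k ≤ n, 0 < ω k) {t : ℝ}
    (ht0 : 0 < t) (ht1 : t < 1) {i : ℕ} (hi : i ≤ n) :
    0 < ∑ k ∈ range (i + 1), ω k * bern n k t := by
  apply Finset.sum_pos
  · intro k hk
    have hk' : k ≤ n := le_trans (Nat.lt_succ_iff.mp (mem_range.mp hk)) hi
    exact mul_pos (hω k hk') (bern_pos hk' ht0 ht1)
  · exact ⟨0, mem_range.mpr (Nat.succ_pos i)⟩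

lemma hfun_eq (n : ℕ) (ω : ℕ → ℝ) (hω : ∀ k ≤ n, 0 < ω k) {t : ℝ}
    (ht0 : 0 < t) (ht1 : t < 1) {i : ℕ} (hi : i ≤ n) :
    hfun n ω i t = ω i * bern n i t / ∑ k ∈ range (i + 1), ω k * bern n k t := by
  unfold hfun
  rcases Nat.eq_zero_or_pos i with rfl | hpos
  · rw [if_pos rfl, range_one, sum_singleton, eq_comm, div_self]
    exact ne_of_gt (mul_pos (hω 0 (Nat.zero_le n)) (bern_pos (Nat.zero_le n) ht0 ht1))
  · rw [if_neg (Nat.pos_iff_ne_zero.mp hpos)]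

lemma key (n : ℕ) {t : ℝ} {j : ℕ} (hj : j + 1 ≤ n) :
    t * ((n : ℝ) - (j + 1) + 1) * bern n j t = ((j : ℝ) + 1) * (1 - t) * bern n (j + 1) t := by
  have hjn : j ≤ n := le_trans (Nat.le_succ j) hj
  have hcast : (n : ℝ) - (j + 1) + 1 = ((n - j : ℕ) : ℝ) := by
    rw [Nat.cast_sub hjn]; push_cast; ring
  have hch : (n.choose (j + 1) : ℝ) * ((j : ℝ) + 1) = (n.choose j : ℝ) * ((n - j : ℕ) : ℝ) := by
    exact_mod_cast congrArg Nat.cast (Nat.choose_succ_right_eq n j)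
  have hexp : n - j = (n - (j + 1)) + 1 := by omega
  rw [Nat.cast_sub hjn] at hch
  unfold bern
  rw [hexp]
  linear_combination (-(t ^ (j + 1) * (1 - t) ^ (n - (j + 1) + 1))) * hch

/-- the recurrence for `h^n_i(t)` for `1 ≤ i ≤ n`, `t ∈ (0,1)`, together with the
strict positivity of its denominator. -/
theorem hfun_recurrence (n : ℕ) (hn : 1 ≤ n) (ω : ℕ → ℝ) (hω : ∀ k ≤ n, 0 < ω k)
    (t : ℝ) (ht0 : 0 < t) (ht1 : t < 1) (i : ℕ) (hi1 : 1 ≤ i) (hin : i ≤ n) :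
    hfun n ω i t =
        (ω i * t * ((n : ℝ) - i + 1) * hfun n ω (i - 1) t) /
          (ω (i - 1) * i * (1 - t) + ω i * t * ((n : ℝ) - i + 1) * hfun n ω (i - 1) t)
    ∧ 0 < ω (i - 1) * i * (1 - t) + ω i * t * ((n : ℝ) - i + 1) * hfun n ω (i - 1) t := by
  obtain ⟨j, rfl⟩ : ∃ j, i = j + 1 := ⟨i - 1, (Nat.succ_pred_eq_of_pos hi1).symm⟩
  simp only [Nat.add_sub_cancel]
  have hjn : j ≤ n := le_trans (Nat.le_succ j) hin
  set S : ℝ := ∑ k ∈ range (j + 1), ω k * bern n k t with hS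
  have hSpos : 0 < S := sum_pos' n ω hω ht0 ht1 hjn
  have hBpos : 0 < bern n (j + 1) t := bern_pos hin ht0 ht1
  have hBjpos : 0 < bern n j t := bern_pos hjn ht0 ht1
  have hωj := hω j hjn
  have hωj1 := hω (j + 1) hin
  have h1t : 0 < 1 - t := by linarith
  have hh : hfun n ω j t = ω j * bern n j t / S := hfun_eq n ω hω ht0 ht1 hjn
  have hk := key n (t := t) hin
  have hnum : ω (j+1) * t * ((n : ℝ) - ((j : ℝ) + 1) + 1) * hfun n ω j t =
      (ω j * ((j:ℝ)+1) * (1 - t)) * (ω (j+1) * bern n (j+1) t / S) := by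
    rw [hh]
    field_simp
    linear_combination hk
  have hpos : 0 < ω j * ((j:ℝ)+1) * (1 - t) +
      ω (j+1) * t * ((n : ℝ) - ((j : ℝ)+1) + 1) * hfun n ω j t := by
    rw [hnum]; positivity
  constructor
  · have hsum : ∑ k ∈ range (j+1+1), ω k * bern n k t = S + ω (j+1) * bern n (j+1) t := by
      rw [hS, Finset.sum_range_succ]
    rw [hfun_eq n ω hω ht0 ht1 hin, hsum]
    push_cast
    rw [hnum]
    have hd : 0 < ω j * ((j:ℝ)+1) * (1-t) +
        ω j * ((j:ℝ)+1) * (1-t) * (ω (j+1) * bern n (j+1) t / S) := by positivity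
    rw [div_eq_div_iff (by positivity) hd.ne']
    field_simp
  · push_cast
    exact hpos
end

section
/- Let n ≥ 1, d ≥ 1, and W_0,...,W_n ∈ ℝ^d, and let P_n(t) := Σ_{k=0}^n B^n_k(t) W_k. Define vectors u^{(j)}_k for j ≥ 0 and 0 ≤ k ≤ n recursively by u^{(0)}_k := W_k and u^{(j)}_k := (n-k)·(u^{(j-1)}_{k+1} - u^{(j-1)}_k) + k·(u^{(j-1)}_k - u^{(j-1)}_{k-1}), where terms with index -1 or n+1 have coefficient 0 and are omitted. Then for every j with 1 ≤ j ≤ n and every real t, the j-th derivative satisfies P_n^{(j)}(t) = Σ_{k=0}^n B^n_k(t) u^{(j)}_k. -/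
open Finset

/-- The vectors `u^{(j)}_k`: `u^{(0)}_k := W_k` and
`u^{(j)}_k := (n-k)·(u^{(j-1)}_{k+1} - u^{(j-1)}_k) + k·(u^{(j-1)}_k - u^{(j-1)}_{k-1})`
(terms with index `-1` or `n+1` have coefficient `0`). -/
noncomputable def uvec (n d : ℕ) (W : ℕ → Fin d → ℝ) : ℕ → ℕ → Fin d → ℝ
  | 0, k => W k
  | j + 1, k =>
      ((n : ℝ) - k) • (uvec n d W j (k + 1) - uvec n d W j k)
        + (k : ℝ) • (uvec n d W j k - uvec n d W j (k - 1))

noncomputable def dern (n k : ℕ) (t : ℝ) : ℝ :=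
  (n.choose k : ℝ) * ((k : ℝ) * t ^ (k - 1)) * (1 - t) ^ (n - k)
    + (n.choose k : ℝ) * t ^ k * (((n - k : ℕ) : ℝ) * (1 - t) ^ (n - k - 1) * (-1))

lemma bern_hasDerivAt (n k : ℕ) (t : ℝ) :
    HasDerivAt (fun s => bern n k s) (dern n k t) t := by
  have h1 : HasDerivAt (fun s : ℝ => 1 - s) (-1) t := (hasDerivAt_id t).const_sub 1
  have h2 : HasDerivAt (fun s : ℝ => (1 - s) ^ (n - k))
      (((n - k : ℕ) : ℝ) * (1 - t) ^ (n - k - 1) * (-1)) t := h1.pow _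
  have h3 : HasDerivAt (fun s : ℝ => (n.choose k : ℝ) * s ^ k)
      ((n.choose k : ℝ) * ((k : ℝ) * t ^ (k - 1))) t :=
    (hasDerivAt_pow k t).const_mul _
  have := h3.fun_mul h2
  simpa [bern, dern, mul_assoc, mul_comm, mul_left_comm] using this

lemma dern_eq (n k : ℕ) (hn : 1 ≤ n) (hk : k ≤ n) (t : ℝ) :
    dern n k t =
      (if k = 0 then 0 else bern n (k - 1) t * ((n : ℝ) - ((k - 1 : ℕ) : ℝ)))
        + ((k : ℝ) - ((n : ℝ) - k)) * bern n k t - ((k : ℝ) + 1) * bern n (k + 1) t := by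
  rcases Nat.eq_zero_or_pos k with rfl | hk0
  · obtain ⟨m, rfl⟩ : ∃ m, n = m + 1 := ⟨n - 1, by omega⟩
    simp only [bern, dern, if_pos rfl]
    push_cast [Nat.choose_one_right]
    ring_nf
    simp [pow_succ]
    ring
  · rcases eq_or_lt_of_le hk with rfl | hkn
    · obtain ⟨m, rfl⟩ : ∃ m, k = m + 1 := ⟨k - 1, by omega⟩
      have h1 : (m + 1) - (m + 1) = 0 := by omega
      have h2 : (m + 1) - ((m + 1) - 1) = 1 := by omega
      have h3 : (m + 1).choose m = m + 1 := by
        rw [← Nat.choose_symm (by omega)]; simp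
      have h4 : m + 1 - m = 1 := by omega
      simp only [bern, dern, if_neg (Nat.succ_ne_zero m), h1, h2, h4, Nat.add_sub_cancel,
        Nat.choose_self, Nat.choose_succ_self, h3]
      push_cast
      ring
    · obtain ⟨i, rfl⟩ : ∃ i, k = i + 1 := ⟨k - 1, by omega⟩
      obtain ⟨m, rfl⟩ : ∃ m, n = i + 1 + m + 1 := ⟨n - i - 2, by omega⟩
      have e1 : (i + 1 + m + 1) - (i + 1) = m + 1 := by omega
      have e2 : (i + 1 + m + 1) - (i + 1) - 1 = m := by omega
      have e3 : (i + 1) - 1 = i := by omega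
      have e4 : (i + 1 + m + 1) - i = m + 2 := by omega
      have e5 : (i + 1 + m + 1) - (i + 1 + 1) = m := by omega
      have hA : ((i + 1 + m + 1).choose i : ℝ) * (m + 2) =
          ((i + 1 + m + 1).choose (i + 1) : ℝ) * (i + 1) := by
        have := Nat.choose_succ_right_eq (i + 1 + m + 1) i
        have h : i + 1 + m + 1 - i = m + 2 := by omega
        rw [h] at this
        exact_mod_cast this.symm
      have hB : ((i + 1 + m + 1).choose (i + 2) : ℝ) * (i + 2) =
          ((i + 1 + m + 1).choose (i + 1) : ℝ) * (m + 1) := by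
        have := Nat.choose_succ_right_eq (i + 1 + m + 1) (i + 1)
        have h : i + 1 + m + 1 - (i + 1) = m + 1 := by omega
        rw [h] at this
        exact_mod_cast this
      simp only [bern, dern, if_neg (Nat.succ_ne_zero i), e1, e2, e3, e4, e5]
      push_cast
      linear_combination (-(t ^ i * (1 - t) ^ (m + 2))) * hA + (t ^ (i + 2) * (1 - t) ^ m) * hB

section
variable (n d : ℕ) (t : ℝ) (u : ℕ → Fin d → ℝ)

lemma bern_top_zero : bern n (n + 1) t = 0 := by
  simp [bern, Nat.choose_succ_self]

lemma shiftA :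
    ∑ k ∈ range (n + 1), (bern n k t * ((n : ℝ) - k)) • u (k + 1) =
      ∑ k ∈ range (n + 1),
        (if k = 0 then (0 : ℝ) else bern n (k - 1) t * ((n : ℝ) - ((k - 1 : ℕ) : ℝ))) • u k := by
  rw [Finset.sum_range_succ, Finset.sum_range_succ']
  simp

lemma shiftB :
    ∑ k ∈ range (n + 1), (((k : ℕ) : ℝ) * bern n k t) • u (k - 1) =
      ∑ k ∈ range (n + 1), ((((k : ℕ) : ℝ) + 1) * bern n (k + 1) t) • u k := by
  rw [Finset.sum_range_succ', Finset.sum_range_succ]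
  simp [bern_top_zero]

lemma key_s7 (hn : 1 ≤ n) :
    ∑ k ∈ range (n + 1), dern n k t • u k =
      ∑ k ∈ range (n + 1), bern n k t •
        (((n : ℝ) - k) • (u (k + 1) - u k) + (k : ℝ) • (u k - u (k - 1))) := by
  have hL : ∑ k ∈ range (n + 1), dern n k t • u k =
      (∑ k ∈ range (n + 1),
        (if k = 0 then (0 : ℝ) else bern n (k - 1) t * ((n : ℝ) - ((k - 1 : ℕ) : ℝ))) • u k)
      + (∑ k ∈ range (n + 1), (((k : ℝ) - ((n : ℝ) - k)) * bern n k t) • u k)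
      - (∑ k ∈ range (n + 1), ((((k : ℕ) : ℝ) + 1) * bern n (k + 1) t) • u k) := by
    rw [← Finset.sum_add_distrib, ← Finset.sum_sub_distrib]
    refine Finset.sum_congr rfl fun k hk => ?_
    rw [dern_eq n k hn (by simpa [Nat.lt_succ_iff] using hk) t]
    rw [sub_smul, add_smul]
  rw [hL, ← shiftA, ← shiftB]
  rw [← Finset.sum_add_distrib, ← Finset.sum_sub_distrib]
  refine Finset.sum_congr rfl fun k hk => ?_
  rw [smul_add, smul_sub, smul_sub, smul_smul, smul_smul]
  rw [smul_sub, smul_sub]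
  module

lemma deriv_step :
    deriv (fun s : ℝ => ∑ k ∈ range (n + 1), bern n k s • u k) t =
      ∑ k ∈ range (n + 1), dern n k t • u k := by
  have : HasDerivAt (fun s : ℝ => ∑ k ∈ range (n + 1), bern n k s • u k)
      (∑ k ∈ range (n + 1), dern n k t • u k) t :=
    HasDerivAt.fun_sum fun k _ => (bern_hasDerivAt n k t).smul_const (u k)
  exact this.deriv

end

/-- for `1 ≤ j ≤ n`, the `j`-th derivative of the degree-`n` polynomial Bézier
curve expressed in the Bernstein basis of the same degree `n`. -/
theorem poly_bezier_iteratedDeriv_same_degree (n d : ℕ) (hn : 1 ≤ n) (hd : 1 ≤ d)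
    (W : ℕ → Fin d → ℝ) (j : ℕ) (hj1 : 1 ≤ j) (hjn : j ≤ n) (t : ℝ) :
    iteratedDeriv j (fun s : ℝ => ∑ k ∈ range (n + 1), bern n k s • W k) t =
      ∑ k ∈ range (n + 1), bern n k t • uvec n d W j k := by
  clear hj1 hjn hd
  induction j generalizing t with
  | zero => simp [iteratedDeriv_zero, uvec]
  | succ j ih =>
    rw [iteratedDeriv_succ]
    have hfun : iteratedDeriv j (fun s : ℝ => ∑ k ∈ range (n + 1), bern n k s • W k) =
        fun s => ∑ k ∈ range (n + 1), bern n k s • uvec n d W j k := funext fun s => ih s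
    rw [hfun, deriv_step n d t (uvec n d W j), key_s7 n d t (uvec n d W j) hn]
    rfl
end

section
/- Let n ≥ 1, d ≥ 1, W_0,...,W_n ∈ ℝ^d, ω_0,...,ω_n > 0, r ≥ 1, and regard each Q^n_i and h^n_i as a function of t on (0,1). Then for every i with 1 ≤ i ≤ n and every t ∈ (0,1), (Q^n_i)^{(r)}(t) = (h^n_i)^{(r)}(t)·(W_i - Q^n_{i-1}(t)) + (Q^n_{i-1})^{(r)}(t) - Σ_{j=0}^{r-1} C(r,j)·(h^n_i)^{(j)}(t)·(Q^n_{i-1})^{(r-j)}(t), where (Q^n_0)^{(k)} ≡ 0 for all k ≥ 1; consequently R_n^{(r)}(t) = (Q^n_n)^{(r)}(t). -/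
open Finset

/-- The rational Bézier curve of degree `n` with control points `W` and weights `ω`. -/
noncomputable def RB (n d : ℕ) (ω : ℕ → ℝ) (W : ℕ → Fin d → ℝ) (t : ℝ) : Fin d → ℝ :=
  (∑ k ∈ range (n + 1), ω k * bern n k t)⁻¹ •
    ∑ k ∈ range (n + 1), (ω k * bern n k t) • W k

/-- The point `Q^n_i(t)`. -/
noncomputable def Qpt (n d : ℕ) (ω : ℕ → ℝ) (W : ℕ → Fin d → ℝ) (i : ℕ) (t : ℝ) : Fin d → ℝ :=
  (∑ k ∈ range (i + 1), ω k * bern n k t)⁻¹ •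
    ∑ k ∈ range (i + 1), (ω k * bern n k t) • W k

/-!
On `(0, 1)` the point `Q_i` is the weighted mean of `Q_{i-1}` (total weight `∑_{k<i} ω_k B_k`)
and `W_i` (weight `ω_i B_i`), that is `Q_i = Q_{i-1} + h_i • (W_i - Q_{i-1})`. Leibniz's rule for
`h_i • (W_i - Q_{i-1})` gives the recurrence: the term `j = r` is `h_i^{(r)} • (W_i - Q_{i-1})`,
and for `j < r` the derivatives of `W_i - Q_{i-1}` are those of `-Q_{i-1}`.
`Q_0` equals `W_0` away from `t = 1`; at `t = 1` it is either constant nearby or discontinuous,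
so all its derivatives vanish everywhere.
-/

open Filter Topology

section IteratedDeriv

variable {𝕜 : Type*} [NontriviallyNormedField 𝕜] {F : Type*} [NormedAddCommGroup F]
  [NormedSpace 𝕜 F]

theorem iteratedDeriv_fun_smul {f : 𝕜 → 𝕜} {g : 𝕜 → F} {x : 𝕜} {n : ℕ}
    (hf : ContDiffAt 𝕜 n f x) (hg : ContDiffAt 𝕜 n g x) :
    iteratedDeriv n (fun y => f y • g y) x = ∑ i ∈ range (n + 1),
      n.choose i • iteratedDeriv i f x • iteratedDeriv (n - i) g x := by
  show iteratedDeriv n (f • g) x = _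
  simpa using iteratedDerivWithin_smul
    (Set.mem_univ x) uniqueDiffOn_univ hf.contDiffWithinAt hg.contDiffWithinAt

theorem iteratedDeriv_add_smul_const_sub {h : 𝕜 → 𝕜} {Q : 𝕜 → F} {c : F} {x : 𝕜} {r : ℕ}
    (hh : ContDiffAt 𝕜 r h x) (hQ : ContDiffAt 𝕜 r Q x) :
    iteratedDeriv r (fun y => Q y + h y • (c - Q y)) x =
      iteratedDeriv r h x • (c - Q x) + iteratedDeriv r Q x
        - ∑ j ∈ range r, ((r.choose j : 𝕜) * iteratedDeriv j h x) • iteratedDeriv (r - j) Q x := by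
  have hcQ : ContDiffAt 𝕜 r (fun y => c - Q y) x := contDiffAt_const.sub hQ
  have hlow : ∀ j ∈ range r, r.choose j • iteratedDeriv j h x •
      iteratedDeriv (r - j) (fun y => c - Q y) x =
        -(((r.choose j : 𝕜) * iteratedDeriv j h x) • iteratedDeriv (r - j) Q x) := by
    intro j hj
    rw [iteratedDeriv_const_sub (Nat.sub_pos_of_lt (mem_range.mp hj)), iteratedDeriv_neg,
      smul_neg, smul_neg, mul_smul, Nat.cast_smul_eq_nsmul]
  have hhcQ : ContDiffAt 𝕜 r (fun y => h y • (c - Q y)) x := hh.smul hcQ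
  rw [iteratedDeriv_fun_add hQ hhcQ, iteratedDeriv_fun_smul hh hcQ, sum_range_succ,
    sum_congr rfl hlow, sum_neg_distrib, Nat.choose_self, one_smul, Nat.sub_self,
    iteratedDeriv_zero]
  abel

theorem deriv_eq_zero_of_eq_const_off_singleton {f : 𝕜 → F} {a : 𝕜} {c : F}
    (hf : ∀ x ≠ a, f x = c) : deriv f = 0 := by
  by_cases hfa : f a = c
  · have : f = fun _ => c := funext fun x => (eq_or_ne x a).elim (· ▸ hfa) (hf x)
    rw [this, deriv_const']
    rfl
  funext x
  rcases eq_or_ne x a with rfl | hxa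
  · -- `f` jumps at `x`, so its derivative there is the junk value `0`.
    refine deriv_zero_of_not_differentiableAt fun hdiff => hfa ?_
    refine tendsto_nhds_unique (l := 𝓝[≠] x)
      (hdiff.continuousAt.tendsto.mono_left nhdsWithin_le_nhds) ?_
    have hfc : (fun _ => c) =ᶠ[𝓝[≠] x] f :=
      eventually_nhdsWithin_of_forall fun y hy => (hf y hy).symm
    exact tendsto_const_nhds.congr' hfc
  · have hfx : f =ᶠ[𝓝 x] fun _ => c := (eventually_ne_nhds hxa).mono hf
    simp [hfx.deriv_eq]

theorem iteratedDeriv_eq_zero_of_eq_const_off_singleton {f : 𝕜 → F} {a : 𝕜} {c : F}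
    (hf : ∀ x ≠ a, f x = c) {k : ℕ} (hk : k ≠ 0) : iteratedDeriv k f = 0 := by
  obtain ⟨k, rfl⟩ := Nat.exists_eq_succ_of_ne_zero hk
  funext x
  simp [iteratedDeriv_succ', deriv_eq_zero_of_eq_const_off_singleton hf]

end IteratedDeriv

section Bezier

variable {n d : ℕ} {ω : ℕ → ℝ} {W : ℕ → Fin d → ℝ} {i : ℕ} {t : ℝ}

@[fun_prop]
theorem contDiff_bern (n k : ℕ) {m : WithTop ℕ∞} : ContDiff ℝ m (bern n k) := by
  unfold bern
  fun_prop

theorem bern_nonneg (k : ℕ) (ht : t ∈ Set.Icc (0 : ℝ) 1) : 0 ≤ bern n k t :=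
  mul_nonneg (mul_nonneg (Nat.cast_nonneg _) (pow_nonneg ht.1 k))
    (pow_nonneg (sub_nonneg.mpr ht.2) _)

theorem bern_zero_pos (ht : t < 1) : 0 < bern n 0 t := by
  simpa [bern] using pow_pos (sub_pos.mpr ht) n

theorem sum_weight_bern_pos (hω : ∀ k ≤ i, 0 < ω k) (ht : t ∈ Set.Ioo (0 : ℝ) 1) :
    0 < ∑ k ∈ range (i + 1), ω k * bern n k t :=
  sum_pos' (fun k hk => mul_nonneg (hω k (mem_range_succ_iff.mp hk)).le
      (bern_nonneg k (Set.Ioo_subset_Icc_self ht)))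
    ⟨0, by simp, mul_pos (hω 0 (Nat.zero_le i)) (bern_zero_pos ht.2)⟩

theorem contDiffAt_Qpt {m : WithTop ℕ∞} (hω : ∀ k ≤ i, 0 < ω k) (ht : t ∈ Set.Ioo (0 : ℝ) 1) :
    ContDiffAt ℝ m (Qpt n d ω W i) t := by
  unfold Qpt
  fun_prop (disch := exact (sum_weight_bern_pos hω ht).ne')

theorem contDiffAt_hfun {m : WithTop ℕ∞} (hω : ∀ k ≤ i, 0 < ω k) (ht : t ∈ Set.Ioo (0 : ℝ) 1) :
    ContDiffAt ℝ m (hfun n ω i) t := by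
  unfold hfun
  split_ifs
  · exact contDiffAt_const
  · fun_prop (disch := exact (sum_weight_bern_pos hω ht).ne')

theorem Qpt_succ (hω : ∀ k ≤ i + 1, 0 < ω k) (ht : t ∈ Set.Ioo (0 : ℝ) 1) :
    Qpt n d ω W (i + 1) t =
      Qpt n d ω W i t + hfun n ω (i + 1) t • (W (i + 1) - Qpt n d ω W i t) := by
  have hD := (sum_weight_bern_pos (n := n) (fun k hk => hω k (hk.trans i.le_succ)) ht).ne'
  have hDb := (sum_weight_bern_pos (n := n) hω ht).ne'
  rw [sum_range_succ] at hDb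
  unfold Qpt hfun
  rw [if_neg i.succ_ne_zero, sum_range_succ _ (i + 1), sum_range_succ _ (i + 1)]
  funext x
  simp only [Pi.smul_apply, Pi.add_apply, Pi.sub_apply, smul_eq_mul, Finset.sum_apply]
  field_simp
  ring

theorem Qpt_zero_of_ne_one (hω : ω 0 ≠ 0) (ht : t ≠ 1) : Qpt n d ω W 0 t = W 0 := by
  have hb : bern n 0 t ≠ 0 := by
    simpa [bern] using pow_ne_zero n (sub_ne_zero.mpr ht.symm)
  rw [Qpt, sum_range_one, sum_range_one, smul_smul, inv_mul_cancel₀ (mul_ne_zero hω hb), one_smul]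

end Bezier

theorem Qpt_higher_deriv_recurrence_general (n d : ℕ)
    (W : ℕ → Fin d → ℝ) (ω : ℕ → ℝ) (hω : ∀ k ≤ n, 0 < ω k) (r : ℕ) :
    (∀ k, 1 ≤ k → ∀ s : ℝ, iteratedDeriv k (Qpt n d ω W 0) s = 0)
    ∧ (∀ i, 1 ≤ i → i ≤ n → ∀ t : ℝ, 0 < t → t < 1 →
        iteratedDeriv r (Qpt n d ω W i) t =
          iteratedDeriv r (hfun n ω i) t • (W i - Qpt n d ω W (i - 1) t)
            + iteratedDeriv r (Qpt n d ω W (i - 1)) t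
            - ∑ j ∈ range r, ((r.choose j : ℝ) * iteratedDeriv j (hfun n ω i) t) •
                iteratedDeriv (r - j) (Qpt n d ω W (i - 1)) t)
    ∧ (∀ t : ℝ, 0 < t → t < 1 →
        iteratedDeriv r (RB n d ω W) t = iteratedDeriv r (Qpt n d ω W n) t) := by
  refine ⟨fun k hk s => ?_, fun i hi hin t ht0 ht1 => ?_, fun t _ _ => rfl⟩
  · rw [iteratedDeriv_eq_zero_of_eq_const_off_singleton
      (fun t ht => Qpt_zero_of_ne_one (hω 0 n.zero_le).ne' ht) (by omega)]
    rfl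
  · obtain ⟨m, rfl⟩ := Nat.exists_eq_add_of_le' hi
    have ht : t ∈ Set.Ioo (0 : ℝ) 1 := ⟨ht0, ht1⟩
    have hωm : ∀ k ≤ m + 1, 0 < ω k := fun k hk => hω k (hk.trans hin)
    have hrec : Qpt n d ω W (m + 1) =ᶠ[𝓝 t]
        fun x => Qpt n d ω W m x + hfun n ω (m + 1) x • (W (m + 1) - Qpt n d ω W m x) :=
      eventually_of_mem (Ioo_mem_nhds ht0 ht1) fun x hx => Qpt_succ hωm hx
    rw [hrec.iteratedDeriv_eq, iteratedDeriv_add_smul_const_sub (contDiffAt_hfun hωm ht)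
      (contDiffAt_Qpt (fun k hk => hωm k (hk.trans m.le_succ)) ht), Nat.add_sub_cancel]

/-- general differential-recurrence relation for the `r`-th derivative of
`Q^n_i` (`r ≥ 1`), with `(Q^n_0)^{(k)} ≡ 0` for all `k ≥ 1`; consequently
`R_n^{(r)}(t) = (Q^n_n)^{(r)}(t)`. -/
theorem Qpt_higher_deriv_recurrence (n d : ℕ) (hn : 1 ≤ n) (hd : 1 ≤ d)
    (W : ℕ → Fin d → ℝ) (ω : ℕ → ℝ) (hω : ∀ k ≤ n, 0 < ω k) (r : ℕ) (hr : 1 ≤ r) :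
    (∀ k, 1 ≤ k → ∀ s : ℝ, iteratedDeriv k (Qpt n d ω W 0) s = 0)
    ∧ (∀ i, 1 ≤ i → i ≤ n → ∀ t : ℝ, 0 < t → t < 1 →
        iteratedDeriv r (Qpt n d ω W i) t =
          iteratedDeriv r (hfun n ω i) t • (W i - Qpt n d ω W (i - 1) t)
            + iteratedDeriv r (Qpt n d ω W (i - 1)) t
            - ∑ j ∈ range r, ((r.choose j : ℝ) * iteratedDeriv j (hfun n ω i) t) •
                iteratedDeriv (r - j) (Qpt n d ω W (i - 1)) t)
    ∧ (∀ t : ℝ, 0 < t → t < 1 →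
        iteratedDeriv r (RB n d ω W) t = iteratedDeriv r (Qpt n d ω W n) t) :=
  Qpt_higher_deriv_recurrence_general n d W ω hω r
end

section
/- Let n ∈ ℕ, d ≥ 1, W_0,...,W_n ∈ ℝ^d, ω_0,...,ω_n > 0, and let k > n. Then for every t ∈ [0,1], A_0(t)·R_n^{(k)}(t) = - Σ_{i=k-n}^{k-1} C(k,i)·A_{k-i}(t)·R_n^{(i)}(t). -/
open Finset

/-- `A_i(t)`: the `i`-th derivative of the weight polynomial `∑_j ω_j B^n_j`. -/
noncomputable def Apoly (n : ℕ) (ω : ℕ → ℝ) (i : ℕ) (t : ℝ) : ℝ :=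
  iteratedDeriv i (fun s : ℝ => ∑ j ∈ range (n + 1), ω j * bern n j s) t

open Polynomial

lemma iteratedDeriv_polyeval (q : ℝ[X]) (i : ℕ) :
    iteratedDeriv i (fun s : ℝ => q.eval s) = fun s => (derivative^[i] q).eval s := by
  induction i with
  | zero => rfl
  | succ i IH =>
    rw [iteratedDeriv_succ, IH]
    funext s
    rw [Function.iterate_succ_apply']
    exact Polynomial.deriv (p := derivative^[i] q)

lemma iteratedDeriv_polyeval_smul {F : Type*} [NormedAddCommGroup F] [NormedSpace ℝ F]
    (m : ℕ) (q : ℕ → ℝ[X]) (c : ℕ → F) (i : ℕ) :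
    iteratedDeriv i (fun s : ℝ => ∑ j ∈ range m, (q j).eval s • c j) =
      fun s => ∑ j ∈ range m, ((derivative^[i] (q j)).eval s) • c j := by
  induction i with
  | zero => rfl
  | succ i IH =>
    rw [iteratedDeriv_succ, IH]
    funext s
    rw [deriv_fun_sum (fun j _ => ((derivative^[i] (q j)).differentiable.differentiableAt).smul_const (c j))]
    refine Finset.sum_congr rfl fun j _ => ?_
    rw [deriv_smul_const ((derivative^[i] (q j)).differentiable.differentiableAt) (c j),
      Polynomial.deriv, Function.iterate_succ_apply']

lemma pascal_smul {F : Type*} [AddCommGroup F] [Module ℝ F] (k : ℕ) (a : ℕ → ℕ → F) :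
    ∑ i ∈ range (k+1), (k.choose i : ℝ) • (a (k-i+1) i + a (k-i) (i+1)) =
      ∑ i ∈ range (k+2), ((k+1).choose i : ℝ) • a (k+1-i) i := by
  rw [sum_range_succ' _ (k+1)]
  have h1 : ∀ i ∈ range (k+1),
      (((k+1).choose (i+1) : ℝ)) • a (k+1-(i+1)) (i+1)
        = (k.choose i : ℝ) • a (k-i) (i+1) + (k.choose (i+1) : ℝ) • a (k-i) (i+1) := by
    intro i hi
    rw [Nat.choose_succ_succ, Nat.cast_add, add_smul, Nat.succ_sub_succ]
  rw [Finset.sum_congr rfl h1, Finset.sum_add_distrib]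
  simp only [smul_add, Finset.sum_add_distrib]
  have h2 : ∑ i ∈ range (k+1), (k.choose i : ℝ) • a (k-i+1) i
      = ∑ i ∈ range (k+1), (k.choose (i+1) : ℝ) • a (k-i) (i+1)
        + ((k+1).choose 0 : ℝ) • a (k+1-0) 0 := by
    rw [sum_range_succ' _ k, sum_range_succ _ (k)]
    simp only [Nat.choose_succ_self, Nat.cast_zero, zero_smul, add_zero, Nat.choose_zero_right,
      Nat.cast_one, one_smul, Nat.sub_zero]
    congr 1
    refine Finset.sum_congr rfl fun i hi => ?_
    rw [mem_range] at hi
    congr 2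
    omega
  rw [h2]
  abel

lemma iteratedDerivWithin_of_isOpen'' {F : Type*} [NormedAddCommGroup F] [NormedSpace ℝ F]
    {U : Set ℝ} (hU : IsOpen U) (i : ℕ) (g : ℝ → F) :
    Set.EqOn (iteratedDerivWithin i g U) (iteratedDeriv i g) U := fun x hx => by
  rw [iteratedDerivWithin_eq_iteratedFDerivWithin, iteratedDeriv_eq_iteratedFDeriv,
    iteratedFDerivWithin_of_isOpen i hU hx]

lemma differentiableAt_iteratedDeriv {F : Type*} [NormedAddCommGroup F] [NormedSpace ℝ F]
    {U : Set ℝ} (hU : IsOpen U) {g : ℝ → F} (hg : ContDiffOn ℝ (⊤ : ℕ∞) g U)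
    (i : ℕ) {x : ℝ} (hx : x ∈ U) : DifferentiableAt ℝ (iteratedDeriv i g) x := by
  have h1 : DifferentiableWithinAt ℝ (iteratedDerivWithin i g U) U x :=
    hg.differentiableOn_iteratedDerivWithin (by exact_mod_cast WithTop.coe_lt_top i)
      hU.uniqueDiffOn x hx
  have h2 : DifferentiableAt ℝ (iteratedDerivWithin i g U) x :=
    h1.differentiableAt (hU.mem_nhds hx)
  have h3 : iteratedDerivWithin i g U =ᶠ[nhds x] iteratedDeriv i g :=
    Filter.eventuallyEq_of_mem (hU.mem_nhds hx) (iteratedDerivWithin_of_isOpen'' hU i g)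
  exact h3.differentiableAt_iff.mp h2

lemma leibniz_smul {F : Type*} [NormedAddCommGroup F] [NormedSpace ℝ F]
    {U : Set ℝ} (hU : IsOpen U) {f : ℝ → ℝ} {g : ℝ → F}
    (hf : ContDiff ℝ (⊤ : ℕ∞) f) (hg : ContDiffOn ℝ (⊤ : ℕ∞) g U) (k : ℕ) :
    ∀ x ∈ U, iteratedDeriv k (fun y => f y • g y) x =
      ∑ i ∈ range (k+1), (k.choose i : ℝ) •
        (iteratedDeriv (k-i) f x • iteratedDeriv i g x) := by
  induction k with
  | zero => intro x hx; simp
  | succ k IH =>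
    intro x hx
    have hfd : ∀ i (y : ℝ), DifferentiableAt ℝ (iteratedDeriv i f) y := fun i y =>
      (hf.differentiable_iteratedDeriv i
        (by exact_mod_cast WithTop.coe_lt_top i)).differentiableAt
    have hgd : ∀ i, DifferentiableAt ℝ (iteratedDeriv i g) x := fun i =>
      differentiableAt_iteratedDeriv hU hg i hx
    have hev : iteratedDeriv k (fun y => f y • g y) =ᶠ[nhds x]
        fun y => ∑ i ∈ range (k+1), (k.choose i : ℝ) •
          (iteratedDeriv (k-i) f y • iteratedDeriv i g y) := by
      filter_upwards [hU.mem_nhds hx] with y hy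
      exact IH y hy
    rw [iteratedDeriv_succ, hev.deriv_eq]
    rw [deriv_fun_sum (A := fun i y => (k.choose i : ℝ) • (iteratedDeriv (k-i) f y • iteratedDeriv i g y)) (fun i _ => (((hfd (k-i) x).smul (hgd i)).const_smul ((k.choose i : ℝ))))]
    have hterm : ∀ i ∈ range (k+1),
        deriv (fun y => (k.choose i : ℝ) • (iteratedDeriv (k-i) f y • iteratedDeriv i g y)) x
          = (k.choose i : ℝ) • ((iteratedDeriv (k-i+1) f x • iteratedDeriv i g x)
              + (iteratedDeriv (k-i) f x • iteratedDeriv (i+1) g x)) := by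
      intro i _
      rw [deriv_fun_const_smul (f := fun y => iteratedDeriv (k-i) f y • iteratedDeriv i g y) _ ((hfd (k-i) x).smul (hgd i)),
        deriv_fun_smul (hfd (k-i) x) (hgd i)]
      simp only [← iteratedDeriv_succ]
      exact congrArg _ (add_comm _ _)
    rw [Finset.sum_congr rfl hterm]
    exact pascal_smul k (fun j i => iteratedDeriv j f x • iteratedDeriv i g x)

/-- for `k > n` and `t ∈ [0,1]`,
`A_0(t)·R_n^{(k)}(t) = -∑_{i=k-n}^{k-1} C(k,i)·A_{k-i}(t)·R_n^{(i)}(t)`. -/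
theorem rational_bezier_deriv_formula_high_order (n d : ℕ) (hd : 1 ≤ d)
    (W : ℕ → Fin d → ℝ) (ω : ℕ → ℝ) (hω : ∀ k ≤ n, 0 < ω k)
    (k : ℕ) (hk : n < k) (t : ℝ) (ht0 : 0 ≤ t) (ht1 : t ≤ 1) :
    Apoly n ω 0 t • iteratedDeriv k (RB n d ω W) t =
      - ∑ i ∈ Icc (k - n) (k - 1), ((k.choose i : ℝ) * Apoly n ω (k - i) t) •
          iteratedDeriv i (RB n d ω W) t := by
  classical
  set A : ℝ → ℝ := fun s => ∑ j ∈ range (n + 1), ω j * bern n j s with hA_def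
  -- the weight polynomial
  set p : ℕ → ℝ[X] := fun j =>
    Polynomial.C (ω j * (n.choose j : ℝ)) * Polynomial.X ^ j
      * (1 - Polynomial.X) ^ (n - j) with hp_def
  have hp_eval : ∀ j (s : ℝ), (p j).eval s = ω j * bern n j s := by
    intro j s
    simp [hp_def, bern]
    ring
  have hp_deg : ∀ j ∈ range (n + 1), (p j).natDegree ≤ n := by
    intro j hj
    rw [mem_range] at hj
    have h1 : (Polynomial.C (ω j * (n.choose j : ℝ)) * Polynomial.X ^ j).natDegree ≤ j := by
      refine le_trans Polynomial.natDegree_mul_le ?_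
      rw [Polynomial.natDegree_C, Polynomial.natDegree_X_pow]
      omega
    have h2 : ((1 - Polynomial.X : ℝ[X]) ^ (n - j)).natDegree ≤ (n - j) := by
      refine le_trans (Polynomial.natDegree_pow_le) ?_
      have : (1 - Polynomial.X : ℝ[X]).natDegree ≤ 1 :=
        le_trans (Polynomial.natDegree_sub_le _ _) (by simp)
      calc (n - j) * (1 - Polynomial.X : ℝ[X]).natDegree ≤ (n - j) * 1 :=
        Nat.mul_le_mul_left _ this
      _ = n - j := Nat.mul_one _
    calc (p j).natDegree
        ≤ (Polynomial.C (ω j * (n.choose j : ℝ)) * Polynomial.X ^ j).natDegree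
          + ((1 - Polynomial.X : ℝ[X]) ^ (n - j)).natDegree := Polynomial.natDegree_mul_le
      _ ≤ j + (n - j) := add_le_add h1 h2
      _ ≤ n := by omega
  set P : ℝ[X] := ∑ j ∈ range (n + 1), p j with hP_def
  have hA_eval : A = fun s => P.eval s := by
    funext s
    simp only [hA_def, hP_def, Polynomial.eval_finset_sum]
    exact Finset.sum_congr rfl fun j _ => (hp_eval j s).symm
  have hP_deg : P.natDegree ≤ n := Polynomial.natDegree_sum_le_of_forall_le _ _ hp_deg
  have hA_smooth : ContDiff ℝ (⊤ : ℕ∞) A := by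
    rw [hA_eval]
    refine contDiff_of_differentiable_iteratedDeriv fun m _ => ?_
    rw [iteratedDeriv_polyeval]
    exact Polynomial.differentiable _
  have hAzero : ∀ j, n < j → ∀ s : ℝ, iteratedDeriv j A s = 0 := by
    intro j hj s
    rw [hA_eval, iteratedDeriv_polyeval,
      Polynomial.iterate_derivative_eq_zero (lt_of_le_of_lt hP_deg hj)]
    simp
  -- the numerator
  set Nv : ℝ → Fin d → ℝ := fun s => ∑ j ∈ range (n + 1), (ω j * bern n j s) • W j with hNv_def
  have hNv_eval : Nv = fun s => ∑ j ∈ range (n + 1), (p j).eval s • W j := by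
    funext s
    exact Finset.sum_congr rfl fun j _ => by rw [hp_eval]
  have hNv_smooth : ContDiff ℝ (⊤ : ℕ∞) Nv := by
    rw [hNv_eval]
    refine contDiff_of_differentiable_iteratedDeriv fun m _ => ?_
    rw [iteratedDeriv_polyeval_smul]
    exact Differentiable.fun_sum fun j _ => (Polynomial.differentiable _).smul_const _
  have hNv_zero : iteratedDeriv k Nv t = 0 := by
    rw [hNv_eval, iteratedDeriv_polyeval_smul]
    refine Finset.sum_eq_zero fun j hj => ?_
    rw [Polynomial.iterate_derivative_eq_zero (lt_of_le_of_lt (hp_deg j hj) hk)]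
    simp
  -- positivity of A on [0,1]
  have hbern_nonneg : ∀ j, 0 ≤ bern n j t := by
    intro j
    unfold bern
    have h1 : (0:ℝ) ≤ 1 - t := by linarith
    exact mul_nonneg (mul_nonneg (by positivity) (pow_nonneg ht0 _)) (pow_nonneg h1 _)
  have hbern_sum : ∑ j ∈ range (n + 1), bern n j t = 1 := by
    have := add_pow t (1 - t) n
    simp only [add_sub_cancel, one_pow] at this
    rw [this]
    exact Finset.sum_congr rfl fun j _ => by simp only [bern]; ring
  have hApos : 0 < A t := by
    have h1 : (0 : ℝ) < ∑ j ∈ range (n + 1), bern n j t := by rw [hbern_sum]; norm_num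
    obtain ⟨j, hj, hjpos⟩ := Finset.exists_lt_of_sum_lt (f := fun _ : ℕ => (0:ℝ))
      (g := fun j => bern n j t) (s := range (n+1)) (by simpa using h1)
    have hjn : j ≤ n := by rw [mem_range] at hj; omega
    refine lt_of_lt_of_le (mul_pos (hω j hjn) hjpos) ?_
    refine Finset.single_le_sum (f := fun j => ω j * bern n j t) ?_ hj
    intro i hi
    have hin : i ≤ n := by rw [mem_range] at hi; omega
    exact mul_nonneg (hω i hin).le (hbern_nonneg i)
  set U : Set ℝ := {s | A s ≠ 0} with hU_def
  have hUopen : IsOpen U := isOpen_compl_singleton.preimage hA_smooth.continuous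
  have htU : t ∈ U := hApos.ne'
  have hRB_eq : RB n d ω W = fun s => (A s)⁻¹ • Nv s := rfl
  have hRB_smooth : ContDiffOn ℝ (⊤ : ℕ∞) (RB n d ω W) U := by
    rw [hRB_eq]
    exact (hA_smooth.contDiffOn.inv fun x hx => hx).smul hNv_smooth.contDiffOn
  have hmul : ∀ s ∈ U, A s • RB n d ω W s = Nv s := by
    intro s hs
    rw [hRB_eq]
    rw [smul_smul, mul_inv_cancel₀ hs, one_smul]
  have key : iteratedDeriv k (fun y => A y • RB n d ω W y) t = 0 := by
    have hev : (fun y => A y • RB n d ω W y) =ᶠ[nhds t] Nv := by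
      filter_upwards [hUopen.mem_nhds htU] with y hy
      exact hmul y hy
    rw [hev.iteratedDeriv_eq k, hNv_zero]
  have L := leibniz_smul hUopen hA_smooth hRB_smooth k t htU
  rw [key] at L
  rw [Finset.sum_range_succ] at L
  have hsub : ∀ i ∈ range k, i ∉ Icc (k - n) (k - 1) →
      (k.choose i : ℝ) • (iteratedDeriv (k - i) A t • iteratedDeriv i (RB n d ω W) t) = 0 := by
    intro i hi hni
    rw [mem_range] at hi
    rw [mem_Icc] at hni
    have : n < k - i := by omega
    rw [hAzero _ this, zero_smul, smul_zero]
  have hIcc : Icc (k - n) (k - 1) ⊆ range k := by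
    intro i hi
    rw [mem_Icc] at hi
    rw [mem_range]
    omega
  rw [← Finset.sum_subset hIcc hsub] at L
  simp only [Nat.choose_self, Nat.cast_one, one_smul, Nat.sub_self] at L
  have : ∀ i ∈ Icc (k - n) (k - 1),
      ((k.choose i : ℝ) * Apoly n ω (k - i) t) • iteratedDeriv i (RB n d ω W) t
        = (k.choose i : ℝ) • (iteratedDeriv (k - i) A t • iteratedDeriv i (RB n d ω W) t) := by
    intro i _
    rw [mul_smul]
    rfl
  rw [Finset.sum_congr rfl this]
  have hAp : Apoly n ω 0 t = iteratedDeriv 0 A t := rfl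
  rw [hAp]
  exact eq_neg_of_add_eq_zero_right L.symm
end
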